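/- (Proposition 5.2: lattice elliptic regularity) Let d ≥ 1, R > 0, and let Ω ⊂ U(R/4) be open and connected, with Ω_ε = Ω ∩ (εℤ)^d. For every k ≥ 0 there exist ε₀ > 0 and a constant C, both depending only on R, Ω, k and d (in particular independent of ε, a and f), such that for all ε ∈ (0, ε₀], all a ≥ 0 and all bounded f : ∂U_ε(R) → ℝ, the solution h of the lattice Dirichlet problem on U_ε(R) with boundary data f satisfies ‖h‖_{H_k(Ω_ε)} ≤ C (1+a)^{−1/2} max_{y∈∂U_ε(R)} |f(y)| (for ε ≤ ε₀ every lattice derivative occurring in this norm is evaluated using only points of Ū_ε(R)). -/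

import Mathlib

open scoped ENNReal BigOperators

namespace FRD

abbrev Pt (d : ℕ) := Fin d → ℝ
abbrev Idx (d : ℕ) := Fin d → ℤ

variable {d : ℕ}

/-- The lattice point of `(εℤ)^d` with integer coordinates `k`. -/
noncomputable def toPt (ε : ℝ) (k : Idx d) : Pt d := fun i => ε * (k i : ℝ)

/-- The lattice `(εℤ)^d` as a subset of `ℝ^d`. -/
def latt (d : ℕ) (ε : ℝ) : Set (Pt d) := Set.range (toPt (d := d) ε)

/-- Signed unit direction: `e.1` is the coordinate, `e.2` the sign. -/
noncomputable def sdir (d : ℕ) (e : Fin d × Bool) : Pt d :=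
  Pi.single e.1 (if e.2 then (1 : ℝ) else -1)

/-- Forward/backward lattice derivative in the signed direction `e`. -/
noncomputable def nabla (ε : ℝ) (e : Fin d × Bool) (f : Pt d → ℝ) (x : Pt d) : ℝ :=
  ε⁻¹ * (f (x + ε • sdir d e) - f x)

/-- Iterated lattice derivative. -/
noncomputable def nablaList (ε : ℝ) : List (Fin d × Bool) → (Pt d → ℝ) → Pt d → ℝ
  | [], f => f
  | e :: es, f => nabla ε e (nablaList ε es f)

/-- Lattice Laplacian `Δ_ε`. -/
noncomputable def latLap (ε : ℝ) (f : Pt d → ℝ) (x : Pt d) : ℝ :=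
  ε⁻¹ ^ 2 * ∑ μ : Fin d,
    (f (x + ε • (Pi.single μ 1 : Pt d)) + f (x - ε • (Pi.single μ 1 : Pt d)) - 2 * f x)

/-- Open cube of edge length `R` centered at `z` (sup-metric). -/
def cubeC (z : Pt d) (R : ℝ) : Set (Pt d) := {x | ∀ i, |x i - z i| < R / 2}

/-- `U_ε(R)` (centered at `z`). -/
def UC (ε : ℝ) (z : Pt d) (R : ℝ) : Set (Pt d) := cubeC z R ∩ latt d ε

/-- Lattice boundary `∂U_ε(R)` (centered at `z`). -/
def bdryC (ε : ℝ) (z : Pt d) (R : ℝ) : Set (Pt d) :=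
  {y | y ∈ latt d ε ∧ y ∉ UC ε z R ∧ ∃ x ∈ UC ε z R, ‖x - y‖ = ε}

/-- `Ū_ε(R) = U_ε(R) ∪ ∂U_ε(R)`. -/
def clC (ε : ℝ) (z : Pt d) (R : ℝ) : Set (Pt d) := UC ε z R ∪ bdryC ε z R

/-- `h` solves the lattice Dirichlet problem on the cube of edge `R` centered at `z`,
with mass `a` and boundary data `f`. -/
def IsDirSol (ε : ℝ) (z : Pt d) (R a : ℝ) (f h : Pt d → ℝ) : Prop :=
  (∀ x ∈ UC ε z R, a * h x - latLap ε h x = 0) ∧ ∀ x ∈ bdryC ε z R, h x = f x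

/-- Lattice integral of `F` over the lattice points lying in `X` (`ℝ≥0∞`-valued). -/
noncomputable def eint (ε : ℝ) (X : Set (Pt d)) (F : Pt d → ℝ) : ℝ≥0∞ :=
  ∑' k : Idx d, Set.indicator X (fun x => ENNReal.ofReal (ε ^ d * F x)) (toPt ε k)

/-- Squared lattice Sobolev norm `‖f‖²_{H_K(X_ε)}`. -/
noncomputable def sobSq (ε : ℝ) (K : ℕ) (X : Set (Pt d)) (f : Pt d → ℝ) : ℝ≥0∞ :=
  ∑ j ∈ Finset.range (K + 1), (2 : ℝ≥0∞)⁻¹ ^ j *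
    ∑ es : Fin j → Fin d × Bool,
      eint ε X fun x => (nablaList ε (List.ofFn es) f x) ^ 2

/-- Lattice Sobolev norm `‖f‖_{H_K(X_ε)}`. -/
noncomputable def sobNorm (ε : ℝ) (K : ℕ) (X : Set (Pt d)) (f : Pt d → ℝ) : ℝ≥0∞ :=
  sobSq ε K X f ^ (1/2 : ℝ)

/-- Real-valued lattice integral over the whole lattice. -/
noncomputable def lint (ε : ℝ) (F : Pt d → ℝ) : ℝ := ε ^ d * ∑' k : Idx d, F (toPt ε k)

/-- Squared weighted lattice Sobolev norm `‖f‖²_{φ,K}`. -/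
noncomputable def wSobSq (ε : ℝ) (K : ℕ) (φ : Pt d → ℝ) (f : Pt d → ℝ) : ℝ≥0∞ :=
  ∑ j ∈ Finset.range (K + 1), (2 : ℝ≥0∞)⁻¹ ^ j *
    ∑ es : Fin j → Fin d × Bool,
      ∑' k : Idx d, ENNReal.ofReal
        (ε ^ d * φ (toPt ε k) * (nablaList ε (List.ofFn es) f (toPt ε k)) ^ 2)

/-- Weighted lattice Sobolev norm `‖f‖_{φ,K}`. -/
noncomputable def wSobNorm (ε : ℝ) (K : ℕ) (φ : Pt d → ℝ) (f : Pt d → ℝ) : ℝ≥0∞ :=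
  wSobSq ε K φ f ^ (1/2 : ℝ)

/-!
Write `u m = h (ε m)` on `ℤ^d`. By the maximum principle `|u| ≤ F` on the cube. Testing the
equation against `u φ²`, for a cutoff `φ` falling from `1` to `0` over a distance `δ`, and summing
by parts gives Caccioppoli's inequality: `a ∑ u²` and `∑ |∇u|²` over a ball are bounded by
`δ⁻² ∑ u²` over a ball of radius larger by `2δ`. Lattice derivatives commute with `Δ_ε`, so
derivatives of solutions are solutions and the gradient bound can be iterated `k` times on nested
balls; one last use of the `a`-term together with `|u| ≤ F` bounds `(1 + a) ε^d ∑ u²` by a multiple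
of `F²`, since a ball of fixed radius has `O(ε^{-d})` lattice points.
-/

section IntegerLattice

def intDir (e : Fin d × Bool) : Idx d := Pi.single e.1 (if e.2 then 1 else -1)

def flipDir (e : Fin d × Bool) : Fin d × Bool := (e.1, !e.2)

lemma flipDir_involutive : Function.Involutive (flipDir (d := d)) := fun e => by
  simp [flipDir]

lemma intDir_flipDir (e : Fin d × Bool) : intDir (flipDir e) = -intDir e := by
  obtain ⟨μ, b⟩ := e
  cases b <;> simp [intDir, flipDir, ← Pi.single_neg]

lemma add_intDir_add_intDir_flipDir (m : Idx d) (e : Fin d × Bool) :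
    m + intDir e + intDir (flipDir e) = m := by
  rw [intDir_flipDir, add_neg_cancel_right]

noncomputable def diff (ε : ℝ) (e : Fin d × Bool) (u : Idx d → ℝ) (m : Idx d) : ℝ :=
  ε⁻¹ * (u (m + intDir e) - u m)

noncomputable def iterDiff (ε : ℝ) : List (Fin d × Bool) → (Idx d → ℝ) → Idx d → ℝ
  | [], u => u
  | e :: es, u => diff ε e (iterDiff ε es u)

/-- The lattice equation `a u - Δ_ε u = 0` at the point `m` of `ℤ^d`. -/
def SolvesAt (ε a : ℝ) (u : Idx d → ℝ) (m : Idx d) : Prop :=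
  a * u m = ε⁻¹ ^ 2 * ∑ e : Fin d × Bool, (u (m + intDir e) - u m)

lemma SolvesAt.neg {ε a : ℝ} {u : Idx d → ℝ} {m : Idx d} (h : SolvesAt ε a u m) :
    SolvesAt ε a (-u) m := by
  simp only [SolvesAt, Pi.neg_apply, neg_sub_neg] at h ⊢
  rw [mul_neg, h, ← mul_neg, ← Finset.sum_neg_distrib]
  simp only [neg_sub]

lemma SolvesAt.diff {ε a : ℝ} {u : Idx d → ℝ} {m : Idx d} (e : Fin d × Bool)
    (hm : SolvesAt ε a u m) (he : SolvesAt ε a u (m + intDir e)) :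
    SolvesAt ε a (diff ε e u) m := by
  simp only [SolvesAt, FRD.diff] at hm he ⊢
  calc a * (ε⁻¹ * (u (m + intDir e) - u m)) = ε⁻¹ * (a * u (m + intDir e) - a * u m) := by ring
    _ = ε⁻¹ ^ 2 * ∑ e', ε⁻¹ * ((u (m + intDir e + intDir e') - u (m + intDir e))
          - (u (m + intDir e') - u m)) := by
      rw [he, hm, ← mul_sub, ← Finset.sum_sub_distrib, ← Finset.mul_sum]; ring
    _ = _ := by
      refine congrArg _ (Finset.sum_congr rfl fun e' _ => ?_)
      rw [add_right_comm m (intDir e) (intDir e')]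
      ring

lemma toPt_add (ε : ℝ) (m n : Idx d) : toPt ε (m + n) = toPt ε m + toPt ε n := by
  funext i
  simp only [toPt, Pi.add_apply, Int.cast_add, mul_add]

lemma toPt_add_intDir (ε : ℝ) (m : Idx d) (e : Fin d × Bool) :
    toPt ε (m + intDir e) = toPt ε m + ε • sdir d e := by
  rw [toPt_add]
  congr 1
  funext i
  obtain ⟨μ, b⟩ := e
  by_cases hi : i = μ
  · subst hi; cases b <;> simp [toPt, intDir, sdir]
  · simp [toPt, intDir, sdir, hi]

lemma nablaList_toPt (ε : ℝ) (es : List (Fin d × Bool)) (f : Pt d → ℝ) (m : Idx d) :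
    nablaList ε es f (toPt ε m) = iterDiff ε es (fun n => f (toPt ε n)) m := by
  induction es generalizing m with
  | nil => rfl
  | cons e es ih => simp only [nablaList, iterDiff, nabla, diff, ← toPt_add_intDir, ih]

lemma latLap_toPt (ε : ℝ) (f : Pt d → ℝ) (m : Idx d) :
    latLap ε f (toPt ε m) =
      ε⁻¹ ^ 2 * ∑ e : Fin d × Bool, (f (toPt ε (m + intDir e)) - f (toPt ε m)) := by
  simp only [latLap, Fintype.sum_prod_type, Fintype.sum_bool, toPt_add_intDir, sdir]
  congr 1
  refine Finset.sum_congr rfl fun μ _ => ?_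
  simp only [if_true, Bool.false_eq_true, if_false, Pi.single_neg, smul_neg, ← sub_eq_add_neg]
  ring

lemma norm_toPt_add_intDir_sub {ε : ℝ} (hε : 0 ≤ ε) (m : Idx d) (e : Fin d × Bool) :
    ‖toPt ε (m + intDir e) - toPt ε m‖ = ε := by
  rw [toPt_add_intDir, add_sub_cancel_left, norm_smul, sdir, Pi.norm_single,
    Real.norm_of_nonneg hε]
  cases e.2 <;> simp

lemma norm_toPt_add_intDir_sub_le {ε : ℝ} (hε : 0 ≤ ε) (m : Idx d) (e : Fin d × Bool) :
    |‖toPt ε (m + intDir e)‖ - ‖toPt ε m‖| ≤ ε :=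
  (abs_norm_sub_norm_le _ _).trans (norm_toPt_add_intDir_sub hε m e).le

lemma norm_toPt_add_intDir_le {ε : ℝ} (hε : 0 ≤ ε) (m : Idx d) (e : Fin d × Bool) :
    ‖toPt ε (m + intDir e)‖ ≤ ‖toPt ε m‖ + ε := by
  linarith [(abs_le.mp (norm_toPt_add_intDir_sub_le hε m e)).2]

lemma norm_le_norm_toPt_add_intDir {ε : ℝ} (hε : 0 ≤ ε) (m : Idx d) (e : Fin d × Bool) :
    ‖toPt ε m‖ ≤ ‖toPt ε (m + intDir e)‖ + ε := by
  linarith [(abs_le.mp (norm_toPt_add_intDir_sub_le hε m e)).1]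

end IntegerLattice

section LatticeBall

variable {ε : ℝ}

/-- The points `m ∈ ℤ^d` with `‖ε m‖ ≤ s`; the box `[-⌈s/ε⌉, ⌈s/ε⌉]^d` only makes it finite. -/
noncomputable def latticeBall (d : ℕ) (ε s : ℝ) : Finset (Idx d) :=
  (Finset.Icc (fun _ => -⌈s / ε⌉) (fun _ => ⌈s / ε⌉)).filter fun m => ‖toPt ε m‖ ≤ s

lemma abs_coord_le_of_norm_toPt_le (hε : 0 < ε) {s : ℝ} {m : Idx d}
    (hm : ‖toPt ε m‖ ≤ s) (i : Fin d) : |(m i : ℝ)| ≤ s / ε := by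
  rw [le_div_iff₀ hε, ← abs_of_pos hε, ← abs_mul, mul_comm]
  exact (norm_le_pi_norm (toPt ε m) i).trans hm

lemma mem_latticeBall (hε : 0 < ε) {s : ℝ} {m : Idx d} :
    m ∈ latticeBall d ε s ↔ ‖toPt ε m‖ ≤ s := by
  refine ⟨fun h => (Finset.mem_filter.mp h).2, fun h => Finset.mem_filter.mpr ⟨?_, h⟩⟩
  have hc : ∀ i, |(m i : ℝ)| ≤ ⌈s / ε⌉ :=
    fun i => (abs_coord_le_of_norm_toPt_le hε h i).trans (Int.le_ceil _)
  simp only [Finset.mem_Icc, Pi.le_def]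
  exact ⟨fun i => by exact_mod_cast (abs_le.mp (hc i)).1,
    fun i => by exact_mod_cast (abs_le.mp (hc i)).2⟩

lemma latticeBall_mono (hε : 0 < ε) {s t : ℝ} (hst : s ≤ t) :
    latticeBall d ε s ⊆ latticeBall d ε t := fun _ hm =>
  (mem_latticeBall hε).mpr (((mem_latticeBall hε).mp hm).trans hst)

lemma sum_latticeBall_mono (hε : 0 < ε) {s t : ℝ} (hst : s ≤ t) (g : Idx d → ℝ)
    (hg : ∀ m, 0 ≤ g m) : ∑ m ∈ latticeBall d ε s, g m ≤ ∑ m ∈ latticeBall d ε t, g m :=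
  Finset.sum_le_sum_of_subset_of_nonneg (latticeBall_mono hε hst) fun m _ _ => hg m

lemma pow_mul_card_latticeBall_le (hε : 0 < ε) {s : ℝ} (hs : 0 ≤ s) :
    ε ^ d * (latticeBall d ε s).card ≤ (2 * s + 3 * ε) ^ d := by
  set N := ⌈s / ε⌉
  have hN : (N : ℝ) ≤ s / ε + 1 := (Int.ceil_lt_add_one _).le
  have hN0 : 0 ≤ N := Int.ceil_nonneg (div_nonneg hs hε.le)
  have hcard : ((latticeBall d ε s).card : ℝ) ≤ (2 * N + 1 : ℝ) ^ d := by
    have h := Finset.card_le_card (Finset.filter_subset (fun m : Idx d => ‖toPt ε m‖ ≤ s)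
      (Finset.Icc (fun _ => -N) (fun _ => N)))
    rw [Pi.card_Icc, Finset.prod_const, Finset.card_univ, Fintype.card_fin, Int.card_Icc,
      show N + 1 - -N = 2 * N + 1 by ring] at h
    calc ((latticeBall d ε s).card : ℝ) ≤ (((2 * N + 1).toNat ^ d : ℕ) : ℝ) :=
          by exact_mod_cast h
      _ = (2 * N + 1 : ℝ) ^ d := by
          rw [Nat.cast_pow, ← Int.cast_natCast, Int.toNat_of_nonneg (by omega)]; push_cast; rfl
  calc ε ^ d * ((latticeBall d ε s).card : ℝ) ≤ ε ^ d * (2 * N + 1 : ℝ) ^ d :=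
        mul_le_mul_of_nonneg_left hcard (by positivity)
    _ = (ε * (2 * N + 1)) ^ d := (mul_pow _ _ _).symm
    _ ≤ (2 * s + 3 * ε) ^ d := by
        gcongr
        calc ε * (2 * N + 1) ≤ ε * (2 * (s / ε + 1) + 1) := by gcongr
          _ = 2 * s + 3 * ε := by field_simp; ring

lemma sum_latticeBall_sq_le (hε : 0 < ε) {s F : ℝ} (hs : 0 ≤ s) {u : Idx d → ℝ}
    (hu : ∀ m, ‖toPt ε m‖ ≤ s → |u m| ≤ F) :
    ε ^ d * ∑ m ∈ latticeBall d ε s, u m ^ 2 ≤ (2 * s + 3 * ε) ^ d * F ^ 2 := by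
  have hsum : ∑ m ∈ latticeBall d ε s, u m ^ 2 ≤ (latticeBall d ε s).card * F ^ 2 := by
    rw [← nsmul_eq_mul]
    refine Finset.sum_le_card_nsmul _ _ _ fun m hm => ?_
    exact sq_le_sq' (abs_le.mp (hu m ((mem_latticeBall hε).mp hm))).1
      (abs_le.mp (hu m ((mem_latticeBall hε).mp hm))).2
  calc ε ^ d * ∑ m ∈ latticeBall d ε s, u m ^ 2 ≤ ε ^ d * ((latticeBall d ε s).card * F ^ 2) :=
        mul_le_mul_of_nonneg_left hsum (by positivity)
    _ = ε ^ d * (latticeBall d ε s).card * F ^ 2 := by ring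
    _ ≤ (2 * s + 3 * ε) ^ d * F ^ 2 :=
        mul_le_mul_of_nonneg_right (pow_mul_card_latticeBall_le hε hs) (sq_nonneg F)

end LatticeBall

section Caccioppoli

variable {ε a L : ℝ} {u φ : Idx d → ℝ} {A B : Finset (Idx d)}

lemma sum_add_eq_sum_of_support_subset {g : Idx d → ℝ} (t : Idx d)
    (hg : ∀ m, g m ≠ 0 → m ∈ B) (hgt : ∀ m, g (m + t) ≠ 0 → m ∈ B) :
    ∑ m ∈ B, g (m + t) = ∑ m ∈ B, g m := by
  rw [← finsum_eq_sum_of_support_subset _ fun m hm => hgt m hm,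
    ← finsum_eq_sum_of_support_subset _ fun m hm => hg m hm]
  exact finsum_comp_equiv (Equiv.addRight t)

/-- Every lattice edge `{m, m + intDir e}` is counted once from each endpoint. -/
lemma sum_edge_swap (G : Idx d → Idx d → ℝ)
    (hG : ∀ m e, G m (m + intDir e) ≠ 0 → m ∈ B ∧ m + intDir e ∈ B) :
    ∑ e, ∑ m ∈ B, G (m + intDir e) m = ∑ e, ∑ m ∈ B, G m (m + intDir e) := by
  calc ∑ e, ∑ m ∈ B, G (m + intDir e) m
      = ∑ e, ∑ m ∈ B, G m (m + intDir (flipDir e)) := by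
        refine Finset.sum_congr rfl fun e _ => ?_
        have := sum_add_eq_sum_of_support_subset (g := fun m => G m (m + intDir (flipDir e)))
          (intDir e) (fun m hm => (hG m _ hm).1) fun m hm => ?_
        · simpa only [add_intDir_add_intDir_flipDir] using this
        simpa only [add_intDir_add_intDir_flipDir] using (hG _ _ hm).2
    _ = ∑ e, ∑ m ∈ B, G m (m + intDir e) :=
        Equiv.sum_comp (Function.Involutive.toPerm _ flipDir_involutive)
          fun e => ∑ m ∈ B, G m (m + intDir e)

lemma sum_sub_mul_eq_neg_half_sum_sub_mul_sub (g v : Idx d → ℝ)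
    (hv : ∀ m e, v m ≠ 0 → m ∈ B ∧ m + intDir e ∈ B) :
    ∑ e, ∑ m ∈ B, (g (m + intDir e) - g m) * v m =
      -(1 / 2) * ∑ e, ∑ m ∈ B, (g (m + intDir e) - g m) * (v (m + intDir e) - v m) := by
  have hswap := sum_edge_swap (B := B) (fun x y => (g x - g y) * v x) fun m e hm =>
    hv m e (right_ne_zero_of_mul hm)
  have hflip : ∑ e, ∑ m ∈ B, (g m - g (m + intDir e)) * v m =
      -∑ e, ∑ m ∈ B, (g (m + intDir e) - g m) * v m := by
    simp only [← Finset.sum_neg_distrib, ← neg_mul, neg_sub]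
  simp only [mul_sub, Finset.sum_sub_distrib]
  rw [hswap, hflip]
  ring

lemma sum_sq_mul_eq_of_solvesAt (heq : ∀ m, φ m ≠ 0 → SolvesAt ε a u m)
    (hB : ∀ m e, φ m ≠ 0 → m ∈ B ∧ m + intDir e ∈ B) :
    a * ∑ m ∈ B, (u m * φ m) ^ 2 = -(ε⁻¹ ^ 2 / 2) * ∑ e, ∑ m ∈ B,
      (u (m + intDir e) - u m) * (u (m + intDir e) * φ (m + intDir e) ^ 2 - u m * φ m ^ 2) := by
  calc a * ∑ m ∈ B, (u m * φ m) ^ 2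
      = ε⁻¹ ^ 2 * ∑ m ∈ B, ∑ e, (u (m + intDir e) - u m) * (u m * φ m ^ 2) := by
        simp only [Finset.mul_sum, ← Finset.sum_mul]
        refine Finset.sum_congr rfl fun m _ => ?_
        by_cases hφ : φ m = 0
        · simp [hφ]
        · rw [← mul_assoc, ← heq m hφ]; ring
    _ = _ := by
        rw [Finset.sum_comm, sum_sub_mul_eq_neg_half_sum_sub_mul_sub u (fun m => u m * φ m ^ 2)
          fun m e hm => hB m e fun hφ => hm (by simp [hφ])]
        ring

/-- From `(V - U)(V Q² - U P²) = (V - U)² (P² + Q²) / 2 + (V - U)(V + U)(Q - P)(Q + P) / 2`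
and AM-GM on the last term. -/
lemma sq_sub_mul_le_sub_mul_sub (U V P Q : ℝ) :
    (V - U) ^ 2 * (P ^ 2 + Q ^ 2) / 4 - (U ^ 2 + V ^ 2) * (Q - P) ^ 2 ≤
      (V - U) * (V * Q ^ 2 - U * P ^ 2) := by
  nlinarith [sq_nonneg ((V - U) * (Q + P) + 2 * ((V + U) * (Q - P))),
    sq_nonneg ((V - U) * (Q - P))]

lemma sum_sq_mul_sq_diff_le (hA : ∀ m e, φ (m + intDir e) ≠ φ m → m ∈ A)
    (hL : ∀ m e, |diff ε e φ m| ≤ L) :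
    ∑ e, ∑ m ∈ B, u m ^ 2 * diff ε e φ m ^ 2 ≤ 2 * d * L ^ 2 * ∑ m ∈ A, u m ^ 2 := by
  have hterm : ∀ e, ∑ m ∈ B, u m ^ 2 * diff ε e φ m ^ 2 ≤ ∑ m ∈ A, L ^ 2 * u m ^ 2 := by
    intro e
    calc ∑ m ∈ B, u m ^ 2 * diff ε e φ m ^ 2
        = ∑ m ∈ B.filter (· ∈ A), u m ^ 2 * diff ε e φ m ^ 2 := by
          refine (Finset.sum_filter_of_ne fun m _ hm => hA m e fun hφ => hm ?_).symm
          simp [diff, hφ]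
      _ ≤ ∑ m ∈ A, u m ^ 2 * diff ε e φ m ^ 2 :=
          Finset.sum_le_sum_of_subset_of_nonneg (fun m hm => (Finset.mem_filter.mp hm).2)
            fun m _ _ => by positivity
      _ ≤ ∑ m ∈ A, L ^ 2 * u m ^ 2 := Finset.sum_le_sum fun m _ => by
          rw [mul_comm]
          exact mul_le_mul_of_nonneg_right (sq_le_sq' (abs_le.mp (hL m e)).1
            (abs_le.mp (hL m e)).2) (sq_nonneg _)
  calc ∑ e, ∑ m ∈ B, u m ^ 2 * diff ε e φ m ^ 2 ≤ ∑ _e : Fin d × Bool, ∑ m ∈ A, L ^ 2 * u m ^ 2 :=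
        Finset.sum_le_sum fun e _ => hterm e
    _ = 2 * d * L ^ 2 * ∑ m ∈ A, u m ^ 2 := by
        simp only [Finset.sum_const, Finset.card_univ, Fintype.card_prod, Fintype.card_fin,
          Fintype.card_bool, nsmul_eq_mul, ← Finset.mul_sum]
        push_cast
        ring

theorem caccioppoli (heq : ∀ m, φ m ≠ 0 → SolvesAt ε a u m)
    (hB : ∀ m e, φ m ≠ 0 → m ∈ B ∧ m + intDir e ∈ B)
    (hA : ∀ m e, φ (m + intDir e) ≠ φ m → m ∈ A) (hL : ∀ m e, |diff ε e φ m| ≤ L) :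
    a * ∑ m ∈ B, (u m * φ m) ^ 2 +
        8⁻¹ * ∑ e, ∑ m ∈ B, diff ε e u m ^ 2 * (φ m ^ 2 + φ (m + intDir e) ^ 2) ≤
      2 * d * L ^ 2 * ∑ m ∈ A, u m ^ 2 := by
  have hedge : ∀ m e, φ (m + intDir e) ≠ φ m → m ∈ B ∧ m + intDir e ∈ B := by
    intro m e hne
    by_cases hφ : φ m = 0
    · have h := hB (m + intDir e) (flipDir e) fun h => hne (h.trans hφ.symm)
      rw [add_intDir_add_intDir_flipDir] at h
      exact h.symm
    · exact hB m e hφ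
  have hpoint : ∀ e m, diff ε e u m ^ 2 * (φ m ^ 2 + φ (m + intDir e) ^ 2) / 4 -
      (u m ^ 2 + u (m + intDir e) ^ 2) * diff ε e φ m ^ 2 ≤ ε⁻¹ ^ 2 *
      ((u (m + intDir e) - u m) * (u (m + intDir e) * φ (m + intDir e) ^ 2 - u m * φ m ^ 2)) := by
    intro e m
    have h := mul_le_mul_of_nonneg_left (sq_sub_mul_le_sub_mul_sub (u m) (u (m + intDir e))
      (φ m) (φ (m + intDir e))) (sq_nonneg ε⁻¹)
    simp only [diff]
    linarith
  have hswap : ∑ e, ∑ m ∈ B, u (m + intDir e) ^ 2 * diff ε e φ m ^ 2 =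
      ∑ e, ∑ m ∈ B, u m ^ 2 * diff ε e φ m ^ 2 := by
    have h := sum_edge_swap (B := B) (fun x y => u x ^ 2 * (ε⁻¹ * (φ x - φ y)) ^ 2)
      fun m e hm => hedge m e fun h => hm (by simp [h])
    simp only [diff]
    rw [h]
    simp only [← neg_sub (φ (_ + intDir _)), mul_neg, neg_sq]
  have hsum := Finset.sum_le_sum fun e (_ : e ∈ Finset.univ) =>
    Finset.sum_le_sum fun m (_ : m ∈ B) => hpoint e m
  simp only [Finset.sum_sub_distrib, add_mul, Finset.sum_add_distrib, ← Finset.mul_sum,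
    ← Finset.sum_div, hswap] at hsum
  rw [sum_sq_mul_eq_of_solvesAt heq hB]
  linarith [sum_sq_mul_sq_diff_le (B := B) (u := u) hA hL]

end Caccioppoli

section Cutoff

variable {ε δ t : ℝ}

noncomputable def cutoff (ε δ t : ℝ) (m : Idx d) : ℝ :=
  Set.projIcc (0 : ℝ) 1 zero_le_one ((t - ‖toPt ε m‖) / δ)

lemma cutoff_eq_one (hδ : 0 < δ) {m : Idx d} (hm : ‖toPt ε m‖ ≤ t - δ) :
    cutoff ε δ t m = 1 := by
  rw [cutoff, Set.projIcc_of_right_le _ ((one_le_div hδ).mpr (by linarith))]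

lemma norm_toPt_lt_of_cutoff_ne_zero (hδ : 0 < δ) {m : Idx d} (hm : cutoff ε δ t m ≠ 0) :
    ‖toPt ε m‖ < t := by
  by_contra! h
  exact hm (by rw [cutoff, Set.projIcc_of_le_left _ (div_nonpos_of_nonpos_of_nonneg
    (by linarith) hδ.le)])

lemma abs_diff_cutoff_le (hε : 0 < ε) (hδ : 0 < δ) (e : Fin d × Bool) (m : Idx d) :
    |diff ε e (cutoff ε δ t) m| ≤ δ⁻¹ := by
  have h := Set.abs_projIcc_sub_projIcc (h := zero_le_one' ℝ)
    (c := (t - ‖toPt ε (m + intDir e)‖) / δ) (d := (t - ‖toPt ε m‖) / δ)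
  rw [← sub_div, sub_sub_sub_cancel_left, abs_div, abs_of_pos hδ] at h
  rw [diff, abs_mul, abs_of_pos (inv_pos.mpr hε), cutoff, cutoff]
  calc ε⁻¹ * |_| ≤ ε⁻¹ * (|‖toPt ε m‖ - ‖toPt ε (m + intDir e)‖| / δ) :=
        mul_le_mul_of_nonneg_left h (inv_nonneg.mpr hε.le)
    _ ≤ ε⁻¹ * (ε / δ) := by
        gcongr
        rw [abs_sub_comm]
        exact norm_toPt_add_intDir_sub_le hε.le m e
    _ = δ⁻¹ := by field_simp

end Cutoff

section InteriorEstimates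

variable {ε δ a : ℝ} {u : Idx d → ℝ}

theorem caccioppoli_latticeBall (hε : 0 < ε) (hδ : 0 < δ) (ha : 0 ≤ a) {t : ℝ}
    (heq : ∀ m, ‖toPt ε m‖ < t → SolvesAt ε a u m) :
    a * ∑ m ∈ latticeBall d ε (t - δ), u m ^ 2 +
        8⁻¹ * ∑ e, ∑ m ∈ latticeBall d ε (t - δ - ε), diff ε e u m ^ 2 ≤
      2 * d * δ⁻¹ ^ 2 * ∑ m ∈ latticeBall d ε (t + ε), u m ^ 2 := by
  set φ : Idx d → ℝ := cutoff ε δ t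
  have hφ : ∀ m, φ m ≠ 0 → ‖toPt ε m‖ < t := fun m => norm_toPt_lt_of_cutoff_ne_zero hδ
  have hstep := norm_toPt_add_intDir_le hε.le (d := d)
  have hstep' := norm_le_norm_toPt_add_intDir hε.le (d := d)
  have hcac := caccioppoli (B := latticeBall d ε (t + ε)) (A := latticeBall d ε (t + ε))
    (u := u) (φ := φ) (fun m hm => heq m (hφ m hm))
    (fun m e hm => ⟨(mem_latticeBall hε).mpr (by linarith [hφ m hm]),
      (mem_latticeBall hε).mpr (by linarith [hφ m hm, hstep m e])⟩)
    (fun m e hne => (mem_latticeBall hε).mpr <| by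
      by_cases hm : φ m = 0
      · linarith [hφ _ fun h => hne (h.trans hm.symm), hstep' m e]
      · linarith [hφ m hm])
    (fun m e => abs_diff_cutoff_le hε hδ e m)
  have hmass : ∑ m ∈ latticeBall d ε (t - δ), u m ^ 2 ≤
      ∑ m ∈ latticeBall d ε (t + ε), (u m * φ m) ^ 2 := by
    refine (Finset.sum_le_sum fun m hm => le_of_eq ?_).trans
      (Finset.sum_le_sum_of_subset_of_nonneg (latticeBall_mono hε (by linarith))
        fun m _ _ => sq_nonneg _)
    rw [show φ m = 1 from cutoff_eq_one hδ ((mem_latticeBall hε).mp hm), mul_one]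
  have hgrad : ∀ e, ∑ m ∈ latticeBall d ε (t - δ - ε), diff ε e u m ^ 2 ≤
      ∑ m ∈ latticeBall d ε (t + ε), diff ε e u m ^ 2 * (φ m ^ 2 + φ (m + intDir e) ^ 2) := by
    intro e
    refine (Finset.sum_le_sum fun m hm => ?_).trans
      (Finset.sum_le_sum_of_subset_of_nonneg (latticeBall_mono hε (by linarith))
        fun m _ _ => by positivity)
    have hm' := (mem_latticeBall hε).mp hm
    rw [show φ (m + intDir e) = 1 from cutoff_eq_one hδ (by linarith [hstep m e])]
    exact le_mul_of_one_le_right (sq_nonneg _) (by linarith [sq_nonneg (φ m)])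
  calc a * ∑ m ∈ latticeBall d ε (t - δ), u m ^ 2 +
        8⁻¹ * ∑ e, ∑ m ∈ latticeBall d ε (t - δ - ε), diff ε e u m ^ 2
      ≤ a * ∑ m ∈ latticeBall d ε (t + ε), (u m * φ m) ^ 2 + 8⁻¹ * ∑ e,
          ∑ m ∈ latticeBall d ε (t + ε), diff ε e u m ^ 2 * (φ m ^ 2 + φ (m + intDir e) ^ 2) := by
        gcongr with e
        exact hgrad e
    _ ≤ _ := hcac

lemma sum_sq_diff_le (hε : 0 < ε) (hεδ : 2 * ε ≤ δ) (ha : 0 ≤ a) {s : ℝ}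
    (heq : ∀ m, ‖toPt ε m‖ < s + 2 * δ → SolvesAt ε a u m) (e : Fin d × Bool) :
    ∑ m ∈ latticeBall d ε s, diff ε e u m ^ 2 ≤
      16 * d * δ⁻¹ ^ 2 * ∑ m ∈ latticeBall d ε (s + 2 * δ), u m ^ 2 := by
  have h := caccioppoli_latticeBall (δ := δ) hε (by linarith) ha (t := s + δ + ε)
    fun m hm => heq m (by linarith)
  rw [show s + δ + ε - δ - ε = s by ring] at h
  have hsingle := Finset.single_le_sum (f := fun e => ∑ m ∈ latticeBall d ε s, diff ε e u m ^ 2)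
    (fun e _ => Finset.sum_nonneg fun m _ => sq_nonneg _) (Finset.mem_univ e)
  have hball := sum_latticeBall_mono hε (show s + δ + ε + ε ≤ s + 2 * δ by linarith)
    (fun m => u m ^ 2) fun m => sq_nonneg _
  have hmass : 0 ≤ a * ∑ m ∈ latticeBall d ε (s + δ + ε - δ), u m ^ 2 :=
    mul_nonneg ha (Finset.sum_nonneg fun m _ => sq_nonneg _)
  have hC : 0 ≤ 2 * (d : ℝ) * δ⁻¹ ^ 2 := by positivity
  linarith [mul_le_mul_of_nonneg_left hball hC]

lemma mul_sum_sq_le (hε : 0 < ε) (hεδ : 2 * ε ≤ δ) (ha : 0 ≤ a) {s : ℝ}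
    (heq : ∀ m, ‖toPt ε m‖ < s + 2 * δ → SolvesAt ε a u m) :
    a * ∑ m ∈ latticeBall d ε s, u m ^ 2 ≤
      2 * d * δ⁻¹ ^ 2 * ∑ m ∈ latticeBall d ε (s + 2 * δ), u m ^ 2 := by
  have h := caccioppoli_latticeBall (δ := δ) hε (by linarith) ha (t := s + δ)
    fun m hm => heq m (by linarith)
  rw [show s + δ - δ = s by ring] at h
  have hball := sum_latticeBall_mono hε (show s + δ + ε ≤ s + 2 * δ by linarith)
    (fun m => u m ^ 2) fun m => sq_nonneg _
  have hgrad : 0 ≤ 8⁻¹ * ∑ e, ∑ m ∈ latticeBall d ε (s - ε), diff ε e u m ^ 2 := by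
    positivity
  have hC : 0 ≤ 2 * (d : ℝ) * δ⁻¹ ^ 2 := by positivity
  linarith [mul_le_mul_of_nonneg_left hball hC]

lemma solvesAt_iterDiff (hε : 0 ≤ ε) {r : ℝ} (heq : ∀ m, ‖toPt ε m‖ < r → SolvesAt ε a u m)
    (es : List (Fin d × Bool)) (m : Idx d) (hm : ‖toPt ε m‖ + es.length * ε < r) :
    SolvesAt ε a (iterDiff ε es u) m := by
  induction es generalizing m with
  | nil => exact heq m (by simpa using hm)
  | cons e es ih =>
      simp only [List.length_cons, Nat.cast_succ] at hm
      exact (ih m (by linarith)).diff e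
        (ih _ (by linarith [norm_toPt_add_intDir_le hε m e]))

lemma sum_sq_iterDiff_le (hε : 0 < ε) (hεδ : 2 * ε ≤ δ) (ha : 0 ≤ a) {r : ℝ}
    (heq : ∀ m, ‖toPt ε m‖ < r → SolvesAt ε a u m) (es : List (Fin d × Bool)) {s : ℝ}
    (hs : s + 3 * es.length * δ ≤ r) :
    ∑ m ∈ latticeBall d ε s, iterDiff ε es u m ^ 2 ≤
      (16 * d * δ⁻¹ ^ 2) ^ es.length * ∑ m ∈ latticeBall d ε (s + 2 * es.length * δ), u m ^ 2 := by
  induction es generalizing s with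
  | nil => simp [iterDiff]
  | cons e es ih =>
      simp only [List.length_cons, Nat.cast_succ] at hs ⊢
      have hnε : (es.length : ℝ) * (2 * ε) ≤ es.length * δ :=
        mul_le_mul_of_nonneg_left hεδ (Nat.cast_nonneg _)
      have hnδ : 0 ≤ (es.length : ℝ) * δ := mul_nonneg (Nat.cast_nonneg _) (by linarith)
      have hdiff := sum_sq_diff_le (s := s) (e := e) hε hεδ ha fun m hm =>
        solvesAt_iterDiff hε.le heq es m (by linarith)
      have hih := ih (s := s + 2 * δ) (by linarith)
      have hC : 0 ≤ 16 * (d : ℝ) * δ⁻¹ ^ 2 := by positivity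
      calc ∑ m ∈ latticeBall d ε s, iterDiff ε (e :: es) u m ^ 2
          ≤ 16 * d * δ⁻¹ ^ 2 * ∑ m ∈ latticeBall d ε (s + 2 * δ), iterDiff ε es u m ^ 2 := hdiff
        _ ≤ 16 * d * δ⁻¹ ^ 2 * ((16 * d * δ⁻¹ ^ 2) ^ es.length *
              ∑ m ∈ latticeBall d ε (s + 2 * δ + 2 * es.length * δ), u m ^ 2) :=
            mul_le_mul_of_nonneg_left hih hC
        _ = _ := by rw [pow_succ, show s + 2 * δ + 2 * es.length * δ =
              s + 2 * (es.length + 1) * δ by ring]; ring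

lemma one_add_mul_sum_sq_le (hε : 0 < ε) (hεδ : 2 * ε ≤ δ) (ha : 0 ≤ a) {s F : ℝ} (hs : 0 ≤ s)
    (heq : ∀ m, ‖toPt ε m‖ < s + 2 * δ → SolvesAt ε a u m)
    (hbd : ∀ m, ‖toPt ε m‖ ≤ s + 2 * δ → |u m| ≤ F) :
    (1 + a) * (ε ^ d * ∑ m ∈ latticeBall d ε s, u m ^ 2) ≤
      (1 + 2 * d * δ⁻¹ ^ 2) * (2 * s + 6 * δ) ^ d * F ^ 2 := by
  set S := ∑ m ∈ latticeBall d ε (s + 2 * δ), u m ^ 2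
  have hball := sum_latticeBall_mono hε (show s ≤ s + 2 * δ by linarith) (fun m => u m ^ 2)
    fun m => sq_nonneg _
  have hmass := mul_sum_sq_le hε hεδ ha heq
  have hcount := sum_latticeBall_sq_le hε (by linarith) hbd
  have hrad : (2 * (s + 2 * δ) + 3 * ε) ^ d ≤ (2 * s + 6 * δ) ^ d :=
    pow_le_pow_left₀ (by linarith) (by linarith) d
  calc (1 + a) * (ε ^ d * ∑ m ∈ latticeBall d ε s, u m ^ 2)
      = ε ^ d * (∑ m ∈ latticeBall d ε s, u m ^ 2 + a * ∑ m ∈ latticeBall d ε s, u m ^ 2) := by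
        ring
    _ ≤ ε ^ d * (S + 2 * d * δ⁻¹ ^ 2 * S) :=
        mul_le_mul_of_nonneg_left (add_le_add hball hmass) (by positivity)
    _ = (1 + 2 * d * δ⁻¹ ^ 2) * (ε ^ d * S) := by ring
    _ ≤ (1 + 2 * d * δ⁻¹ ^ 2) * ((2 * s + 6 * δ) ^ d * F ^ 2) :=
        mul_le_mul_of_nonneg_left (hcount.trans (mul_le_mul_of_nonneg_right hrad (sq_nonneg F)))
          (by positivity)
    _ = _ := by ring

theorem sum_sq_iterDiff_le_of_abs_le (hε : 0 < ε) (hεδ : 2 * ε ≤ δ) (ha : 0 ≤ a) {s F : ℝ}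
    (hs : 0 ≤ s) {k : ℕ} (heq : ∀ m, ‖toPt ε m‖ < s + 3 * (k + 1) * δ → SolvesAt ε a u m)
    (hbd : ∀ m, ‖toPt ε m‖ < s + 3 * (k + 1) * δ → |u m| ≤ F)
    {es : List (Fin d × Bool)} (hes : es.length ≤ k) :
    (1 + a) * (ε ^ d * ∑ m ∈ latticeBall d ε s, iterDiff ε es u m ^ 2) ≤
      (16 * d * δ⁻¹ ^ 2) ^ es.length *
        ((1 + 2 * d * δ⁻¹ ^ 2) * (2 * (s + 2 * k * δ) + 6 * δ) ^ d * F ^ 2) := by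
  have hδ : 0 < δ := by linarith
  have hk : (es.length : ℝ) ≤ k := by exact_mod_cast hes
  have hkδ : 0 ≤ (k : ℝ) * δ := by positivity
  have hlenδ : (es.length : ℝ) * δ ≤ k * δ := mul_le_mul_of_nonneg_right hk hδ.le
  have hiter := sum_sq_iterDiff_le hε hεδ ha heq es (s := s) (by linarith)
  have hball := sum_latticeBall_mono hε (show s + 2 * es.length * δ ≤ s + 2 * k * δ by linarith)
    (fun m => u m ^ 2) fun m => sq_nonneg _
  have hmass := one_add_mul_sum_sq_le hε hεδ ha (s := s + 2 * k * δ) (by positivity)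
    (fun m hm => heq m (by linarith)) fun m hm => hbd m (by linarith)
  have hC : 0 ≤ (16 * (d : ℝ) * δ⁻¹ ^ 2) ^ es.length := by positivity
  have h1a : 0 ≤ (1 + a) * ε ^ d := by positivity
  calc (1 + a) * (ε ^ d * ∑ m ∈ latticeBall d ε s, iterDiff ε es u m ^ 2)
      ≤ (1 + a) * ε ^ d * ((16 * d * δ⁻¹ ^ 2) ^ es.length *
          ∑ m ∈ latticeBall d ε (s + 2 * k * δ), u m ^ 2) := by
        rw [← mul_assoc]
        exact mul_le_mul_of_nonneg_left (hiter.trans (mul_le_mul_of_nonneg_left hball hC)) h1a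
    _ = (16 * d * δ⁻¹ ^ 2) ^ es.length *
          ((1 + a) * (ε ^ d * ∑ m ∈ latticeBall d ε (s + 2 * k * δ), u m ^ 2)) := by ring
    _ ≤ _ := mul_le_mul_of_nonneg_left hmass hC

end InteriorEstimates

section MaximumPrinciple

variable {ε a : ℝ} {u : Idx d → ℝ}

lemma exists_mem_notMem_of_forall_add_intDir_mem (hd : 1 ≤ d) {S : Finset (Idx d)}
    (hS : S.Nonempty) {I : Set (Idx d)} (hI : ∀ m ∈ S, m ∈ I → ∀ e, m + intDir e ∈ S) :
    ∃ m ∈ S, m ∉ I := by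
  set i₀ : Fin d := ⟨0, hd⟩
  obtain ⟨m₀, hm₀, hmax⟩ := S.exists_max_image (· i₀) hS
  refine ⟨m₀, hm₀, fun hm₀I => ?_⟩
  have h := hmax _ (hI m₀ hm₀ hm₀I (i₀, true))
  simp [intDir] at h

lemma SolvesAt.add_intDir_eq_of_forall_le (hε : ε ≠ 0) (ha : 0 ≤ a) {m : Idx d}
    (h : SolvesAt ε a u m) (hm : 0 ≤ u m) (hle : ∀ e, u (m + intDir e) ≤ u m)
    (e : Fin d × Bool) : u (m + intDir e) = u m := by
  have hnonpos : ∀ e ∈ Finset.univ, u (m + intDir e) - u m ≤ 0 := fun e _ => by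
    linarith [hle e]
  have hsum : ∑ e, (u (m + intDir e) - u m) = 0 := by
    refine le_antisymm (Finset.sum_nonpos hnonpos) ?_
    have hpos : 0 < ε⁻¹ ^ 2 := by positivity
    have : 0 ≤ ε⁻¹ ^ 2 * ∑ e, (u (m + intDir e) - u m) := h ▸ mul_nonneg ha hm
    exact nonneg_of_mul_nonneg_right (by linarith) hpos
  linarith [(Finset.sum_eq_zero_iff_of_nonpos hnonpos).mp hsum e (Finset.mem_univ e)]

theorem le_of_solvesAt (hd : 1 ≤ d) (hε : ε ≠ 0) (ha : 0 ≤ a) {F : ℝ} (hF : 0 ≤ F)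
    {S : Finset (Idx d)} {I : Set (Idx d)} (hI : ∀ m ∈ S, m ∈ I → ∀ e, m + intDir e ∈ S)
    (heq : ∀ m ∈ S, m ∈ I → SolvesAt ε a u m) (hbdry : ∀ m ∈ S, m ∉ I → u m ≤ F) :
    ∀ m ∈ S, u m ≤ F := by
  intro m hm
  have hS : S.Nonempty := ⟨m, hm⟩
  refine (S.le_sup' u hm).trans (not_lt.mp fun hMF => ?_)
  set M := S.sup' hS u
  obtain ⟨m₁, hm₁, hM⟩ := S.exists_mem_eq_sup' hS u
  -- a positive maximum at an interior point spreads to all its neighbours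
  have hIT : ∀ n ∈ S.filter (u · = M), n ∈ I → ∀ e, n + intDir e ∈ S.filter (u · = M) := by
    intro n hn hnI e
    obtain ⟨hnS, hnM⟩ := Finset.mem_filter.mp hn
    refine Finset.mem_filter.mpr ⟨hI n hnS hnI e, ?_⟩
    rw [(heq n hnS hnI).add_intDir_eq_of_forall_le hε ha (by linarith)
      (fun e' => hnM ▸ S.le_sup' u (hI n hnS hnI e')) e, hnM]
  obtain ⟨m₀, hm₀, hm₀I⟩ := exists_mem_notMem_of_forall_add_intDir_mem hd
    ⟨m₁, Finset.mem_filter.mpr ⟨hm₁, hM.symm⟩⟩ hIT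
  obtain ⟨hm₀S, hm₀M⟩ := Finset.mem_filter.mp hm₀
  linarith [hbdry m₀ hm₀S hm₀I]

theorem abs_le_of_solvesAt (hd : 1 ≤ d) (hε : ε ≠ 0) (ha : 0 ≤ a) {F : ℝ} (hF : 0 ≤ F)
    {S : Finset (Idx d)} {I : Set (Idx d)} (hI : ∀ m ∈ S, m ∈ I → ∀ e, m + intDir e ∈ S)
    (heq : ∀ m ∈ S, m ∈ I → SolvesAt ε a u m) (hbdry : ∀ m ∈ S, m ∉ I → |u m| ≤ F) :
    ∀ m ∈ S, |u m| ≤ F := fun m hm => abs_le.mpr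
  ⟨neg_le.mp (le_of_solvesAt hd hε ha hF hI (fun n hn hnI => (heq n hn hnI).neg)
      (fun n hn hnI => (neg_le_abs _).trans (hbdry n hn hnI)) m hm),
    le_of_solvesAt hd hε ha hF hI heq (fun n hn hnI => (le_abs_self _).trans (hbdry n hn hnI))
      m hm⟩

end MaximumPrinciple

section DirichletProblem

variable {ε R a : ℝ} {f h : Pt d → ℝ}

lemma mem_cubeC_zero_of_norm_lt {x : Pt d} (hx : ‖x‖ < R / 2) : x ∈ cubeC 0 R :=
  fun i => by simpa using (norm_le_pi_norm x i).trans_lt hx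

lemma norm_le_of_mem_cubeC_zero (hR : 0 ≤ R) {x : Pt d} (hx : x ∈ cubeC 0 R) : ‖x‖ ≤ R / 2 :=
  (pi_norm_le_iff_of_nonneg (by linarith)).mpr fun i => by simpa using (hx i).le

lemma toPt_mem_UC {m : Idx d} (hm : ‖toPt ε m‖ < R / 2) : toPt ε m ∈ UC ε 0 R :=
  ⟨mem_cubeC_zero_of_norm_lt hm, Set.mem_range_self m⟩

lemma toPt_add_intDir_mem_clC (hε : 0 ≤ ε) {z : Pt d} {m : Idx d} (hm : toPt ε m ∈ UC ε z R)
    (e : Fin d × Bool) : toPt ε (m + intDir e) ∈ clC ε z R := by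
  by_cases hU : toPt ε (m + intDir e) ∈ UC ε z R
  · exact Or.inl hU
  · refine Or.inr ⟨Set.mem_range_self _, hU, toPt ε m, hm, ?_⟩
    rw [norm_sub_rev]
    exact norm_toPt_add_intDir_sub hε m e

lemma IsDirSol.solvesAt {z : Pt d} (hsol : IsDirSol ε z R a f h) {m : Idx d}
    (hm : toPt ε m ∈ UC ε z R) : SolvesAt ε a (fun n => h (toPt ε n)) m := by
  have := hsol.1 _ hm
  rw [SolvesAt, ← latLap_toPt]
  linarith

theorem IsDirSol.abs_le (hd : 1 ≤ d) (hε : 0 < ε) (hR : 0 < R) (ha : 0 ≤ a)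
    (hsol : IsDirSol ε 0 R a f h) {F : ℝ} (hf : ∀ y ∈ bdryC ε 0 R, |f y| ≤ F) :
    0 ≤ F ∧ ∀ m, ‖toPt ε m‖ < R / 2 → |h (toPt ε m)| ≤ F := by
  classical
  set S := (latticeBall d ε (R / 2 + ε)).filter (toPt ε · ∈ clC ε 0 R)
  set I : Set (Idx d) := {m | toPt ε m ∈ UC ε 0 R}
  have hmemS : ∀ m, toPt ε m ∈ clC ε 0 R → ‖toPt ε m‖ ≤ R / 2 + ε → m ∈ S :=
    fun m hcl hm => Finset.mem_filter.mpr ⟨(mem_latticeBall hε).mpr hm, hcl⟩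
  have hI : ∀ m ∈ S, m ∈ I → ∀ e, m + intDir e ∈ S := fun m _ hm e =>
    hmemS _ (toPt_add_intDir_mem_clC hε.le hm e) (by
      linarith [norm_toPt_add_intDir_le hε.le m e, norm_le_of_mem_cubeC_zero hR.le hm.1])
  have hbdry : ∀ m ∈ S, m ∉ I → toPt ε m ∈ bdryC ε 0 R :=
    fun m hm hmI => (Finset.mem_filter.mp hm).2.resolve_left hmI
  have hF : 0 ≤ F := by
    have h0 : ‖toPt ε (0 : Idx d)‖ < R / 2 := by
      rw [show toPt ε (0 : Idx d) = 0 from funext fun i => by simp [toPt], norm_zero]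
      positivity
    obtain ⟨m, hm, hmI⟩ := exists_mem_notMem_of_forall_add_intDir_mem hd
      ⟨0, hmemS 0 (Or.inl (toPt_mem_UC h0)) (by linarith)⟩ hI
    exact (abs_nonneg _).trans (hf _ (hbdry m hm hmI))
  refine ⟨hF, fun m hm => abs_le_of_solvesAt hd hε.ne' ha hF hI
    (fun n _ hn => hsol.solvesAt hn) (fun n hn hnI => ?_) m
    (hmemS m (Or.inl (toPt_mem_UC hm)) (by linarith))⟩
  rw [hsol.2 _ (hbdry n hn hnI)]
  exact hf _ (hbdry n hn hnI)

end DirichletProblem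

section SobolevNorm

variable {ε : ℝ} {k : ℕ} {X : Set (Pt d)} {f : Pt d → ℝ}

lemma eint_le_ofReal_sum (hε : 0 < ε) {s : ℝ} (hX : ∀ x ∈ X, ‖x‖ ≤ s) {G : Pt d → ℝ}
    (hG : ∀ x, 0 ≤ G x) :
    eint ε X G ≤ ENNReal.ofReal (ε ^ d * ∑ m ∈ latticeBall d ε s, G (toPt ε m)) := by
  rw [eint, tsum_eq_sum (s := latticeBall d ε s) fun m hm => Set.indicator_of_notMem
      (fun hx => hm ((mem_latticeBall hε).mpr (hX _ hx))) _, Finset.mul_sum,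
    ENNReal.ofReal_sum_of_nonneg fun m _ => mul_nonneg (by positivity) (hG _)]
  exact Finset.sum_le_sum fun m _ => Set.indicator_le_self _ _ _

lemma sobSq_le_ofReal {c : ℕ → ℝ} (hc0 : ∀ j, 0 ≤ c j)
    (hc : ∀ j ≤ k, ∀ es : Fin j → Fin d × Bool,
      eint ε X (fun x => nablaList ε (List.ofFn es) f x ^ 2) ≤ ENNReal.ofReal (c j)) :
    sobSq ε k X f ≤ ENNReal.ofReal (∑ j ∈ Finset.range (k + 1), (2 * d) ^ j * c j) := by
  rw [sobSq, ENNReal.ofReal_sum_of_nonneg fun j _ => mul_nonneg (by positivity) (hc0 j)]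
  refine Finset.sum_le_sum fun j hj => ?_
  calc (2 : ℝ≥0∞)⁻¹ ^ j * ∑ es : Fin j → Fin d × Bool,
        eint ε X (fun x => nablaList ε (List.ofFn es) f x ^ 2)
      ≤ ∑ es : Fin j → Fin d × Bool, eint ε X (fun x => nablaList ε (List.ofFn es) f x ^ 2) :=
        mul_le_of_le_one_left (by positivity)
          (pow_le_one₀ (by positivity) (ENNReal.inv_le_one.mpr one_le_two))
    _ ≤ ∑ _es : Fin j → Fin d × Bool, ENNReal.ofReal (c j) :=
        Finset.sum_le_sum fun es _ => hc j (Nat.lt_succ_iff.mp (Finset.mem_range.mp hj)) es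
    _ = ENNReal.ofReal ((2 * d) ^ j * c j) := by
        rw [Finset.sum_const, Finset.card_univ, nsmul_eq_mul, ← ENNReal.ofReal_natCast,
          ← ENNReal.ofReal_mul (Nat.cast_nonneg _)]
        simp [Fintype.card_prod, mul_comm]

lemma sobNorm_le_ofReal {c : ℝ} (hc : 0 ≤ c) (h : sobSq ε k X f ≤ ENNReal.ofReal (c ^ 2)) :
    sobNorm ε k X f ≤ ENNReal.ofReal c := by
  calc sobNorm ε k X f ≤ ENNReal.ofReal (c ^ 2) ^ (1 / 2 : ℝ) :=
        ENNReal.rpow_le_rpow h (by norm_num)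
    _ = ENNReal.ofReal c := by
        rw [ENNReal.ofReal_pow hc, ← ENNReal.rpow_natCast, ← ENNReal.rpow_mul]
        norm_num

end SobolevNorm

theorem IsDirSol.eint_nablaList_sq_le {ε δ R a F s : ℝ} {f h : Pt d → ℝ} {X : Set (Pt d)}
    {k : ℕ} (hε : 0 < ε) (hεδ : 2 * ε ≤ δ) (ha : 0 ≤ a) (hsol : IsDirSol ε 0 R a f h)
    (hbd : ∀ m, ‖toPt ε m‖ < R / 2 → |h (toPt ε m)| ≤ F) (hs : 0 ≤ s)
    (hsR : s + 3 * (k + 1) * δ ≤ R / 2) (hX : ∀ x ∈ X, ‖x‖ ≤ s) {es : List (Fin d × Bool)}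
    (hes : es.length ≤ k) :
    eint ε X (fun x => nablaList ε es h x ^ 2) ≤ ENNReal.ofReal ((16 * d * δ⁻¹ ^ 2) ^ es.length *
      ((1 + 2 * d * δ⁻¹ ^ 2) * (2 * (s + 2 * k * δ) + 6 * δ) ^ d * F ^ 2) / (1 + a)) := by
  refine (eint_le_ofReal_sum hε hX fun x => sq_nonneg _).trans (ENNReal.ofReal_le_ofReal ?_)
  simp only [nablaList_toPt]
  rw [le_div_iff₀' (by linarith)]
  exact sum_sq_iterDiff_le_of_abs_le hε hεδ ha hs
    (fun m hm => hsol.solvesAt (toPt_mem_UC (by linarith))) (fun m hm => hbd m (by linarith)) hes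

theorem lattice_elliptic_regularity_general (d k : ℕ) (hd : 1 ≤ d) (R : ℝ) (hR : 0 < R)
    (Ω : Set (Pt d)) (hΩs : Ω ⊆ cubeC (0 : Pt d) (R / 4)) :
    ∃ ε₀ C : ℝ, 0 < ε₀ ∧ 0 < C ∧
      ∀ ε : ℝ, 0 < ε → ε ≤ ε₀ → ∀ a : ℝ, 0 ≤ a →
      ∀ f h : Pt d → ℝ, IsDirSol ε (0 : Pt d) R a f h →
      ∀ F : ℝ, (∀ y ∈ bdryC ε (0 : Pt d) R, |f y| ≤ F) →
        sobNorm ε k (Ω ∩ latt d ε) h ≤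
          ENNReal.ofReal (C * (Real.sqrt (1 + a))⁻¹ * F) := by
  set δ : ℝ := R / (8 * (k + 1))
  have hδ : 0 < δ := by positivity
  have hradius : R / 8 + 3 * (k + 1) * δ = R / 2 := by simp only [δ]; field_simp; ring
  have hΩ : ∀ x ∈ Ω, ‖x‖ ≤ R / 8 := fun x hx => by
    linarith [norm_le_of_mem_cubeC_zero (by positivity) (hΩs hx)]
  set K : ℝ := 16 * d * δ⁻¹ ^ 2
  set W : ℝ := (1 + 2 * d * δ⁻¹ ^ 2) * (2 * (R / 8 + 2 * k * δ) + 6 * δ) ^ d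
  set C₀ : ℝ := ∑ j ∈ Finset.range (k + 1), (2 * d) ^ j * K ^ j
  have hC₀W : 0 < C₀ * W :=
    mul_pos (Finset.sum_pos (fun j _ => by positivity) Finset.nonempty_range_add_one)
      (by positivity)
  refine ⟨δ / 2, Real.sqrt (C₀ * W), by positivity, Real.sqrt_pos.mpr hC₀W,
    fun ε hε hεδ a ha f h hsol F hf => ?_⟩
  obtain ⟨hF, hbd⟩ := hsol.abs_le hd hε hR ha hf
  refine sobNorm_le_ofReal (by positivity) ((sobSq_le_ofReal
    (c := fun j => K ^ j * (W * F ^ 2) / (1 + a)) (fun j => by positivity) fun j hj es => ?_).trans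
    (le_of_eq ?_))
  · have hbound := hsol.eint_nablaList_sq_le (X := Ω ∩ latt d ε) hε (by linarith) ha hbd
      (by positivity) hradius.le (fun x hx => hΩ x hx.1) (es := List.ofFn es) (by simpa using hj)
    rwa [List.length_ofFn] at hbound
  · rw [mul_pow, mul_pow, Real.sq_sqrt hC₀W.le, inv_pow, Real.sq_sqrt (by linarith)]
    simp only [C₀, Finset.sum_mul]
    exact congrArg _ (Finset.sum_congr rfl fun j _ => by ring)

/-- Proposition 5.2, lattice elliptic regularity. -/
theorem lattice_elliptic_regularity (d k : ℕ) (hd : 1 ≤ d) (R : ℝ) (hR : 0 < R)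
    (Ω : Set (Pt d)) (hΩo : IsOpen Ω) (hΩc : IsConnected Ω)
    (hΩs : Ω ⊆ cubeC (0 : Pt d) (R / 4)) :
    ∃ ε₀ C : ℝ, 0 < ε₀ ∧ 0 < C ∧
      ∀ ε : ℝ, 0 < ε → ε ≤ ε₀ → ∀ a : ℝ, 0 ≤ a →
      ∀ f h : Pt d → ℝ, IsDirSol ε (0 : Pt d) R a f h →
      ∀ F : ℝ, (∀ y ∈ bdryC ε (0 : Pt d) R, |f y| ≤ F) →
        sobNorm ε k (Ω ∩ latt d ε) h ≤
          ENNReal.ofReal (C * (Real.sqrt (1 + a))⁻¹ * F) :=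
  lattice_elliptic_regularity_general d k hd R hR Ω hΩs

end FRD
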